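/- arXiv:2008.08972 — 4 statements merged into one kernel-verified Lean document; each statement's English description precedes it below -/
import Mathlib

section
/- Let T₀ ∈ ℝ, M, K, m ∈ ℕ. Let Σ : [T₀,∞) → ℝ^{M×K} and Δ : [T₀,∞) → ℝ^{M×m} be continuous matrix-valued functions such that ‖Σ(t)‖_F ≤ Σ̄ and ‖Δ(t)‖_F ≤ Δ̄ for all t ≥ T₀, and such that the uniform full-rank condition holds: there is k > 0 with vᵀ Σ(t)ᵀ Σ(t) v ≥ k‖v‖² for all v ∈ ℝ^K and t ≥ T₀. Let α, β > 0, and let Γ : [T₀,∞) → ℝ^{K×K} be differentiable with Γ(t) symmetric positive definite, satisfying the Riccati update law Γ'(t) = β Γ(t) − α Γ(t) Σ(t)ᵀ Σ(t) Γ(t) and the uniform gain bounds γ̲ I ⪯ Γ(t) ⪯ γ̄ I for all t ≥ T₀, where 0 < γ̲ ≤ γ̄. Let W̃ : [T₀,∞) → ℝ^{K×m} be differentiable and satisfy the weight-error dynamics W̃'(t) = −α Γ(t) Σ(t)ᵀ (Σ(t) W̃(t) − Δ(t)). Define A := (γ̲/2)(α k + β/γ̄) and B := 2(α Σ̄ Δ̄)²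 / (α k + β/γ̄). Then the function V(t) := tr(W̃(t)ᵀ Γ(t)⁻¹ W̃(t)) satisfies V(t) ≤ V(T₀) e^{−A(t−T₀)} + B/A for all t ≥ T₀, and consequently limsup_{t→∞} ‖W̃(t)‖_F ≤ √(γ̄ B / A); in particular W̃ is uniformly ultimately bounded. -/
/-!
`V = tr(W̃ᵀ Γ⁻¹ W̃)` is a Lyapunov function. Since `(Γ⁻¹)' = -Γ⁻¹ Γ' Γ⁻¹ = -β Γ⁻¹ + α ΣᵀΣ`, the
Riccati law cancels half of the dissipation `-2α ‖ΣW̃‖²` produced by the weight dynamics, leaving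
`V' = -β V - α ‖ΣW̃‖² + 2α tr((ΣW̃)ᵀ Δ)`. Inverting the gain bounds (inversion reverses the Loewner
order) gives `‖W̃‖² / γ̄ ≤ V ≤ ‖W̃‖² / γ̲`, full rank gives `‖ΣW̃‖² ≥ k ‖W̃‖²`, and Cauchy–Schwarz
followed by Young's inequality bounds the cross term by `(c/2) ‖W̃‖² + B` with `c = αk + β/γ̄`.
Hence `V' ≤ -A V + B`, Grönwall's inequality gives the exponential bound, and the bound on the
limsup follows from `‖W̃‖² ≤ γ̄ V`.
-/

open Matrix Filter

attribute [local instance] Matrix.normedAddCommGroup Matrix.normedSpace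

/-- The Frobenius norm of a real matrix. -/
noncomputable def frobNorm {M K : ℕ} (A : Matrix (Fin M) (Fin K) ℝ) : ℝ :=
  Real.sqrt (∑ i, ∑ j, (A i j) ^ 2)

/-- The Euclidean norm of a real vector. -/
noncomputable def euclNorm {K : ℕ} (v : Fin K → ℝ) : ℝ :=
  Real.sqrt (∑ i, (v i) ^ 2)

open Topology

namespace HasDerivAt

variable {l m n : Type*} [Fintype m] [Fintype n] {t : ℝ}

theorem matrix_mul {f : ℝ → Matrix l m ℝ} {g : ℝ → Matrix m n ℝ} {f' : Matrix l m ℝ}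
    {g' : Matrix m n ℝ} (hf : HasDerivAt f f' t) (hg : HasDerivAt g g' t) :
    HasDerivAt (fun s => f s * g s) (f' * g t + f t * g') t := by
  refine hasDerivAt_pi.2 fun i => hasDerivAt_pi.2 fun j => ?_
  simpa only [Matrix.add_apply, mul_apply, ← Finset.sum_add_distrib] using
    HasDerivAt.fun_sum fun k _ =>
      (hasDerivAt_pi.1 (hasDerivAt_pi.1 hf i) k).fun_mul (hasDerivAt_pi.1 (hasDerivAt_pi.1 hg k) j)

theorem matrix_transpose {f : ℝ → Matrix m n ℝ} {f' : Matrix m n ℝ} (hf : HasDerivAt f f' t) :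
    HasDerivAt (fun s => (f s)ᵀ) f'ᵀ t :=
  hasDerivAt_pi.2 fun i => hasDerivAt_pi.2 fun j => hasDerivAt_pi.1 (hasDerivAt_pi.1 hf j) i

theorem matrix_trace {f : ℝ → Matrix n n ℝ} {f' : Matrix n n ℝ} (hf : HasDerivAt f f' t) :
    HasDerivAt (fun s => (f s).trace) f'.trace t :=
  HasDerivAt.fun_sum fun i _ => hasDerivAt_pi.1 (hasDerivAt_pi.1 hf i) i

theorem matrix_inv [DecidableEq n] {f : ℝ → Matrix n n ℝ} {f' : Matrix n n ℝ}
    (hf : HasDerivAt f f' t) (hdet : (f t).det ≠ 0) :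
    HasDerivAt (fun s => (f s)⁻¹) (-((f t)⁻¹ * f' * (f t)⁻¹)) t := by
  have hcont : ContinuousAt (fun s => (f s)⁻¹) t :=
    (continuousAt_matrix_inv _ (by simpa [Ring.inverse_eq_inv'] using continuousAt_inv₀ hdet)).comp
      hf.continuousAt
  have hunit : ∀ᶠ s in 𝓝[≠] t, (f s).det ≠ 0 :=
    ((continuous_id.matrix_det.continuousAt.comp hf.continuousAt).eventually_ne hdet).filter_mono
      nhdsWithin_le_nhds
  -- `A⁻¹ - B⁻¹ = A⁻¹ (B - A) B⁻¹`
  have key : ∀ᶠ s in 𝓝[≠] t,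
      -((f s)⁻¹ * slope f t s * (f t)⁻¹) = slope (fun s => (f s)⁻¹) t s := by
    filter_upwards [hunit] with s hs
    simp only [slope_def_module, Matrix.mul_smul, Matrix.smul_mul, Matrix.mul_sub, Matrix.sub_mul,
      ← smul_neg, neg_sub]
    rw [Matrix.nonsing_inv_mul _ (isUnit_iff_ne_zero.2 hs), Matrix.mul_assoc,
      Matrix.mul_nonsing_inv _ (isUnit_iff_ne_zero.2 hdet), Matrix.one_mul, Matrix.mul_one]
  exact hasDerivAt_iff_tendsto_slope.2 <| (((hcont.tendsto.mono_left nhdsWithin_le_nhds).mul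
    (hasDerivAt_iff_tendsto_slope.1 hf)).mul_const _).neg.congr' key

end HasDerivAt

section Riccati

variable {l m n : Type*} [Fintype l] [Fintype m] [Fintype n] [DecidableEq n]

theorem hasDerivAt_trace_transpose_mul_inv_mul_of_riccati {Γ : ℝ → Matrix n n ℝ}
    {W : ℝ → Matrix n m ℝ} {S : Matrix l n ℝ} {D : Matrix l m ℝ} {α β t : ℝ}
    (hΓ : HasDerivAt Γ (β • Γ t - α • (Γ t * Sᵀ * S * Γ t)) t)
    (hW : HasDerivAt W (-(α • (Γ t * Sᵀ * (S * W t - D)))) t) (hΓt : (Γ t).IsHermitian)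
    (hdet : (Γ t).det ≠ 0) :
    HasDerivAt (fun s => ((W s)ᵀ * (Γ s)⁻¹ * W s).trace)
      (-β * ((W t)ᵀ * (Γ t)⁻¹ * W t).trace - α * ((S * W t)ᵀ * (S * W t)).trace
        + 2 * α * ((S * W t)ᵀ * D).trace) t := by
  have hPG : (Γ t)⁻¹ * Γ t = 1 := nonsing_inv_mul _ (isUnit_iff_ne_zero.2 hdet)
  have hGP : Γ t * (Γ t)⁻¹ = 1 := mul_nonsing_inv _ (isUnit_iff_ne_zero.2 hdet)
  have hP : ((Γ t)⁻¹)ᵀ = (Γ t)⁻¹ := hΓt.inv.eq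
  convert ((hW.matrix_transpose.matrix_mul (hΓ.matrix_inv hdet)).matrix_mul hW).matrix_trace using 1
  set P := (Γ t)⁻¹
  set X := W t
  have hPΓ'P : P * (β • Γ t - α • (Γ t * Sᵀ * S * Γ t)) * P = β • P - α • (Sᵀ * S) := by
    simp only [Matrix.mul_sub, Matrix.sub_mul, Matrix.mul_smul, Matrix.smul_mul, ← Matrix.mul_assoc,
      hPG, Matrix.one_mul]
    rw [Matrix.mul_assoc _ (Γ t), hGP, Matrix.mul_one]
  have hXPW' : Xᵀ * P * (-(α • (Γ t * Sᵀ * (S * X - D))))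
      = -(α • ((S * X)ᵀ * (S * X))) + α • ((S * X)ᵀ * D) := by
    simp only [Matrix.mul_neg, Matrix.mul_smul, ← Matrix.mul_assoc, Matrix.mul_sub, transpose_mul]
    rw [Matrix.mul_assoc _ P, hPG, Matrix.mul_one, smul_sub]
    abel
  have hsymm : ((-(α • (Γ t * Sᵀ * (S * X - D))))ᵀ * P * X).trace
      = (Xᵀ * P * (-(α • (Γ t * Sᵀ * (S * X - D))))).trace := by
    rw [← trace_transpose]
    simp only [transpose_mul, transpose_transpose, hP, Matrix.mul_assoc]
  rw [Matrix.add_mul, trace_add, trace_add, hsymm, hXPW', Matrix.mul_neg, Matrix.neg_mul, hPΓ'P]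
  simp only [Matrix.mul_sub, Matrix.sub_mul, Matrix.mul_smul, Matrix.smul_mul, trace_add, trace_neg,
    trace_sub, trace_smul, smul_eq_mul, transpose_mul, Matrix.mul_assoc]
  ring

end Riccati

namespace Matrix

variable {m n : Type*} [Fintype m] [Fintype n]

theorem trace_transpose_mul_mul_le_of_posSemidef_sub {P Q : Matrix n n ℝ}
    (h : (Q - P).PosSemidef) (X : Matrix n m ℝ) : (Xᵀ * P * X).trace ≤ (Xᵀ * Q * X).trace := by
  have := (h.conjTranspose_mul_mul_same X).trace_nonneg
  rwa [conjTranspose_eq_transpose_of_trivial, Matrix.mul_sub, Matrix.sub_mul, trace_sub,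
    sub_nonneg] at this

variable [DecidableEq n]

theorem trace_transpose_mul_smul_one_mul (c : ℝ) (X : Matrix n m ℝ) :
    (Xᵀ * (c • (1 : Matrix n n ℝ)) * X).trace = c * (Xᵀ * X).trace := by
  rw [Matrix.mul_smul, Matrix.mul_one, Matrix.smul_mul, trace_smul, smul_eq_mul]

theorem PosDef.posSemidef_inv_sub_of_posSemidef_smul_one_sub {G : Matrix n n ℝ} (hG : G.PosDef)
    {c : ℝ} (hc : 0 < c) (h : (c • 1 - G).PosSemidef) : (G⁻¹ - c⁻¹ • 1).PosSemidef := by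
  have hdet := (isUnit_iff_isUnit_det G).1 hG.isUnit
  have hGG : G⁻¹ * G = 1 := nonsing_inv_mul _ hdet
  have hGG' : G * G⁻¹ = 1 := mul_nonsing_inv _ hdet
  have key :
      G⁻¹ - c⁻¹ • 1 = (1 - c⁻¹ • G)ᴴ * G⁻¹ * (1 - c⁻¹ • G) + (c⁻¹ * c⁻¹) • (c • 1 - G) := by
    rw [conjTranspose_sub, conjTranspose_one, conjTranspose_smul, hG.isHermitian.eq]
    simp only [Matrix.sub_mul, Matrix.mul_sub, Matrix.smul_mul, Matrix.mul_smul, Matrix.one_mul,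
      Matrix.mul_one, hGG, hGG', smul_sub, smul_smul, star_trivial]
    match_scalars <;> field_simp <;> ring
  rw [key]
  exact (hG.inv.posSemidef.conjTranspose_mul_mul_same _).add (h.smul (by positivity))

theorem PosDef.posSemidef_smul_one_sub_inv_of_posSemidef_sub_smul_one {G : Matrix n n ℝ}
    (hG : G.PosDef) {c : ℝ} (hc : 0 < c) (h : (G - c • 1).PosSemidef) :
    (c⁻¹ • 1 - G⁻¹).PosSemidef := by
  have hdet := (isUnit_iff_isUnit_det G).1 hG.isUnit
  have hGG : G⁻¹ * G = 1 := nonsing_inv_mul _ hdet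
  have key :
      c⁻¹ • 1 - G⁻¹ = c⁻¹ • ((1 - c • G⁻¹)ᴴ * (1 - c • G⁻¹)) + (G⁻¹)ᴴ * (G - c • 1) * G⁻¹ := by
    rw [conjTranspose_sub, conjTranspose_one, conjTranspose_smul, hG.inv.isHermitian.eq]
    simp only [Matrix.sub_mul, Matrix.mul_sub, Matrix.smul_mul, Matrix.mul_smul, Matrix.one_mul,
      Matrix.mul_one, hGG, smul_sub, smul_smul, star_trivial]
    match_scalars <;> field_simp <;> ring
  rw [key]
  have hsq : ((1 - c • G⁻¹)ᴴ * (1 - c • G⁻¹)).PosSemidef := posSemidef_conjTranspose_mul_self _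
  exact (hsq.smul (inv_nonneg.2 hc.le)).add (h.conjTranspose_mul_mul_same _)

end Matrix

section frobNorm

variable {p q r : ℕ}

theorem frobNorm_nonneg (A : Matrix (Fin p) (Fin q) ℝ) : 0 ≤ frobNorm A :=
  Real.sqrt_nonneg _

-- Mathlib's Frobenius norm is not an instance, and the one in scope is the sup norm.
theorem frobNorm_eq_frobenius_norm (A : Matrix (Fin p) (Fin q) ℝ) :
    frobNorm A = @Norm.norm _ frobeniusSeminormedAddCommGroup.toNorm A := by
  rw [frobenius_norm_def, frobNorm, Real.sqrt_eq_rpow]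
  simp

theorem frobNorm_mul_le (A : Matrix (Fin p) (Fin q) ℝ) (B : Matrix (Fin q) (Fin r) ℝ) :
    frobNorm (A * B) ≤ frobNorm A * frobNorm B := by
  simpa only [frobNorm_eq_frobenius_norm] using frobenius_norm_mul A B

theorem frobNorm_sq (A : Matrix (Fin p) (Fin q) ℝ) : frobNorm A ^ 2 = (Aᵀ * A).trace := by
  rw [frobNorm, Real.sq_sqrt (by positivity), Finset.sum_comm]
  simp [trace, mul_apply, sq]

theorem trace_transpose_mul_le_frobNorm_mul (A B : Matrix (Fin p) (Fin q) ℝ) :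
    (Aᵀ * B).trace ≤ frobNorm A * frobNorm B := by
  simpa [trace, mul_apply, frobNorm, ← Finset.sum_product', Finset.sum_comm (γ := Fin q)] using
    Real.sum_mul_le_sqrt_mul_sqrt Finset.univ (fun x : Fin p × Fin q => A x.1 x.2)
      (fun x => B x.1 x.2)

end frobNorm

section LoewnerBounds

variable {K m : ℕ} {G : Matrix (Fin K) (Fin K) ℝ}

theorem frobNorm_sq_le_mul_trace_transpose_mul_inv_mul (hG : G.PosDef) {c : ℝ} (hc : 0 < c)
    (h : (c • 1 - G).PosSemidef) (X : Matrix (Fin K) (Fin m) ℝ) :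
    frobNorm X ^ 2 ≤ c * (Xᵀ * G⁻¹ * X).trace := by
  rw [← inv_mul_le_iff₀ hc, frobNorm_sq, ← trace_transpose_mul_smul_one_mul]
  exact trace_transpose_mul_mul_le_of_posSemidef_sub
    (hG.posSemidef_inv_sub_of_posSemidef_smul_one_sub hc h) X

theorem mul_trace_transpose_mul_inv_mul_le_frobNorm_sq (hG : G.PosDef) {c : ℝ} (hc : 0 < c)
    (h : (G - c • 1).PosSemidef) (X : Matrix (Fin K) (Fin m) ℝ) :
    c * (Xᵀ * G⁻¹ * X).trace ≤ frobNorm X ^ 2 := by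
  rw [← le_inv_mul_iff₀ hc, frobNorm_sq, ← trace_transpose_mul_smul_one_mul]
  exact trace_transpose_mul_mul_le_of_posSemidef_sub
    (hG.posSemidef_smul_one_sub_inv_of_posSemidef_sub_smul_one hc h) X

end LoewnerBounds

theorem posSemidef_transpose_mul_self_sub_smul_one {M K : ℕ} {S : Matrix (Fin M) (Fin K) ℝ}
    {k : ℝ}
    (h : ∀ v : Fin K → ℝ, k * euclNorm v ^ 2 ≤ v ⬝ᵥ (Sᵀ * S).mulVec v) :
    (Sᵀ * S - k • 1).PosSemidef := by
  refine .of_dotProduct_mulVec_nonneg ((isHermitian_conjTranspose_mul_self S).sub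
    (isHermitian_one.smul (IsSelfAdjoint.all k))) fun v => ?_
  have hv := h v
  rw [euclNorm, Real.sq_sqrt (by positivity)] at hv
  have hvv : ∑ i, v i ^ 2 = v ⬝ᵥ v := by simp [dotProduct, sq]
  rw [hvv] at hv
  simp only [star_trivial, sub_mulVec, smul_mulVec, one_mulVec, dotProduct_sub, dotProduct_smul,
    smul_eq_mul]
  linarith

theorem lyapunov_deriv_le_neg_mul_add {M K m : ℕ} {G : Matrix (Fin K) (Fin K) ℝ}
    {S : Matrix (Fin M) (Fin K) ℝ} {D : Matrix (Fin M) (Fin m) ℝ} (X : Matrix (Fin K) (Fin m) ℝ)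
    {Sbar Dbar k α β γlo γhi : ℝ} (hS : frobNorm S ≤ Sbar) (hD : frobNorm D ≤ Dbar) (hk : 0 < k)
    (hSS : (Sᵀ * S - k • 1).PosSemidef)
    (hα : 0 < α) (hβ : 0 < β) (hG : G.PosDef) (hγlo : 0 < γlo) (hγhi : 0 < γhi)
    (hGlo : (G - γlo • 1).PosSemidef) (hGhi : (γhi • 1 - G).PosSemidef) :
    -β * (Xᵀ * G⁻¹ * X).trace - α * ((S * X)ᵀ * (S * X)).trace + 2 * α * ((S * X)ᵀ * D).trace ≤
      -((γlo / 2) * (α * k + β / γhi)) * (Xᵀ * G⁻¹ * X).trace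
        + 2 * (α * Sbar * Dbar) ^ 2 / (α * k + β / γhi) := by
  set V := (Xᵀ * G⁻¹ * X).trace
  set F := frobNorm X
  set c := α * k + β / γhi with hc_def
  have hc : 0 < c := by positivity
  have hF : 0 ≤ F := frobNorm_nonneg X
  have hFV : F ^ 2 ≤ γhi * V := frobNorm_sq_le_mul_trace_transpose_mul_inv_mul hG hγhi hGhi X
  have hVF : γlo * V ≤ F ^ 2 := mul_trace_transpose_mul_inv_mul_le_frobNorm_sq hG hγlo hGlo X
  have hSX : k * F ^ 2 ≤ ((S * X)ᵀ * (S * X)).trace := by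
    have h := trace_transpose_mul_mul_le_of_posSemidef_sub hSS X
    rw [trace_transpose_mul_smul_one_mul, ← frobNorm_sq] at h
    simpa only [transpose_mul, Matrix.mul_assoc] using h
  have hSXD : ((S * X)ᵀ * D).trace ≤ Sbar * Dbar * F :=
    calc ((S * X)ᵀ * D).trace ≤ frobNorm (S * X) * frobNorm D :=
          trace_transpose_mul_le_frobNorm_mul _ _
      _ ≤ (Sbar * F) * Dbar :=
          mul_le_mul ((frobNorm_mul_le S X).trans (by gcongr)) hD (frobNorm_nonneg D)
            (mul_nonneg ((frobNorm_nonneg S).trans hS) hF)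
      _ = Sbar * Dbar * F := by ring
  have hyoung : 2 * (α * Sbar * Dbar) * F ≤ c / 2 * F ^ 2 + 2 * (α * Sbar * Dbar) ^ 2 / c := by
    have h : c / 2 * F ^ 2 + 2 * (α * Sbar * Dbar) ^ 2 / c - 2 * (α * Sbar * Dbar) * F
        = (c * F - 2 * (α * Sbar * Dbar)) ^ 2 / (2 * c) := by
      field_simp
      ring
    linarith [div_nonneg (sq_nonneg (c * F - 2 * (α * Sbar * Dbar))) (by positivity : 0 ≤ 2 * c)]
  have hβV : β / γhi * F ^ 2 ≤ β * V := by
    rw [div_mul_eq_mul_div, div_le_iff₀ hγhi]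
    linarith [mul_le_mul_of_nonneg_left hFV hβ.le]
  have hcF : c * F ^ 2 = α * (k * F ^ 2) + β / γhi * F ^ 2 := by rw [hc_def]; ring
  linarith [mul_le_mul_of_nonneg_left hSX hα.le, mul_le_mul_of_nonneg_left hSXD hα.le,
    mul_le_mul_of_nonneg_left hVF hc.le]

theorem le_mul_exp_add_div_of_hasDerivAt_le {f f' : ℝ → ℝ} {a A B : ℝ} (hA : 0 < A) (hB : 0 ≤ B)
    (hf : ∀ t ≥ a, HasDerivAt f (f' t) t) (hf' : ∀ t ≥ a, f' t ≤ -A * f t + B) {t : ℝ}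
    (ht : a ≤ t) : f t ≤ f a * Real.exp (-A * (t - a)) + B / A := by
  have h := le_gronwallBound_of_liminf_deriv_right_le (b := t)
    (fun x hx => (hf x hx.1).continuousAt.continuousWithinAt)
    (fun x hx r hr => (hf x hx.1).hasDerivWithinAt.liminf_right_slope_le hr) le_rfl
    (fun x hx => hf' x hx.1) t ⟨ht, le_rfl⟩
  rw [gronwallBound_of_K_ne_0 (neg_ne_zero.2 hA.ne'), div_neg] at h
  beta_reduce at h
  linarith [mul_nonneg (div_nonneg hB hA.le) (Real.exp_pos (-A * (t - a))).le]

theorem limsup_le_sqrt_of_sq_le_mul_exp_add {f : ℝ → ℝ} {a A c C D : ℝ} (hA : 0 < A)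
    (hf0 : ∀ t, 0 ≤ f t) (hf : ∀ t ≥ a, f t ^ 2 ≤ c * (C * Real.exp (-A * (t - a)) + D)) :
    limsup f atTop ≤ Real.sqrt (c * D) := by
  have hexp : Tendsto (fun t => Real.exp (-A * (t - a))) atTop (𝓝 0) :=
    Real.tendsto_exp_atBot.comp <|
      (tendsto_atTop_add_const_right _ _ tendsto_id).const_mul_atTop_of_neg (neg_lt_zero.2 hA)
  have hg : Tendsto (fun t => Real.sqrt (c * (C * Real.exp (-A * (t - a)) + D))) atTop
      (𝓝 (Real.sqrt (c * D))) := by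
    simpa using (((hexp.const_mul C).add_const D).const_mul c).sqrt
  refine (limsup_le_limsup ?_ ?_ hg.isBoundedUnder_le).trans hg.limsup_eq.le
  · filter_upwards [eventually_ge_atTop a] with t ht
    exact Real.le_sqrt_of_sq_le (hf t ht)
  · exact isBoundedUnder_of_eventually_ge (.of_forall hf0) |>.isCoboundedUnder_le

theorem stmt0_general (T₀ : ℝ) (M K m : ℕ)
    (Sig : ℝ → Matrix (Fin M) (Fin K) ℝ) (Del : ℝ → Matrix (Fin M) (Fin m) ℝ)
    (Sbar Dbar : ℝ)
    (hSbar : ∀ t ≥ T₀, frobNorm (Sig t) ≤ Sbar)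
    (hDbar : ∀ t ≥ T₀, frobNorm (Del t) ≤ Dbar)
    (k : ℝ) (hk : 0 < k)
    (hFullRank : ∀ t ≥ T₀, ∀ v : Fin K → ℝ,
      k * euclNorm v ^ 2 ≤ v ⬝ᵥ ((Sig t)ᵀ * Sig t).mulVec v)
    (α β : ℝ) (hα : 0 < α) (hβ : 0 < β)
    (Γ : ℝ → Matrix (Fin K) (Fin K) ℝ)
    (hΓderiv : ∀ t ≥ T₀, HasDerivAt Γ (β • Γ t - α • (Γ t * (Sig t)ᵀ * Sig t * Γ t)) t)
    (hΓpd : ∀ t ≥ T₀, (Γ t).PosDef)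
    (γlo γhi : ℝ) (hγlo : 0 < γlo) (hγ : γlo ≤ γhi)
    (hΓlo : ∀ t ≥ T₀, (Γ t - γlo • (1 : Matrix (Fin K) (Fin K) ℝ)).PosSemidef)
    (hΓhi : ∀ t ≥ T₀, (γhi • (1 : Matrix (Fin K) (Fin K) ℝ) - Γ t).PosSemidef)
    (W : ℝ → Matrix (Fin K) (Fin m) ℝ)
    (hWderiv : ∀ t ≥ T₀, HasDerivAt W (-(α • (Γ t * (Sig t)ᵀ * (Sig t * W t - Del t)))) t)
    (A B : ℝ)
    (hA : A = (γlo / 2) * (α * k + β / γhi))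
    (hB : B = 2 * (α * Sbar * Dbar) ^ 2 / (α * k + β / γhi)) :
    (∀ t ≥ T₀,
        ((W t)ᵀ * (Γ t)⁻¹ * W t).trace ≤
          ((W T₀)ᵀ * (Γ T₀)⁻¹ * W T₀).trace * Real.exp (-A * (t - T₀)) + B / A) ∧
      limsup (fun t => frobNorm (W t)) atTop ≤ Real.sqrt (γhi * B / A) := by
  have hγhi : 0 < γhi := hγlo.trans_le hγ
  have hA0 : 0 < A := by rw [hA]; positivity
  have hB0 : 0 ≤ B := by rw [hB]; positivity
  have hV : ∀ t ≥ T₀, ((W t)ᵀ * (Γ t)⁻¹ * W t).trace ≤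
      ((W T₀)ᵀ * (Γ T₀)⁻¹ * W T₀).trace * Real.exp (-A * (t - T₀)) + B / A := by
    refine fun t ht => le_mul_exp_add_div_of_hasDerivAt_le hA0 hB0
      (fun s hs => hasDerivAt_trace_transpose_mul_inv_mul_of_riccati (hΓderiv s hs) (hWderiv s hs)
        (hΓpd s hs).isHermitian (hΓpd s hs).det_pos.ne') (fun s hs => ?_) ht
    rw [hA, hB]
    exact lyapunov_deriv_le_neg_mul_add (W s) (hSbar s hs) (hDbar s hs) hk
      (posSemidef_transpose_mul_self_sub_smul_one (hFullRank s hs)) hα hβ (hΓpd s hs) hγlo hγhi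
      (hΓlo s hs) (hΓhi s hs)
  refine ⟨hV, ?_⟩
  rw [mul_div_assoc]
  exact limsup_le_sqrt_of_sq_le_mul_exp_add hA0 (fun t => frobNorm_nonneg _) fun t ht =>
    (frobNorm_sq_le_mul_trace_transpose_mul_inv_mul (hΓpd t ht) hγhi (hΓhi t ht) (W t)).trans
      (mul_le_mul_of_nonneg_left (hV t ht) hγhi.le)

/-- Theorem 1: uniform ultimate boundedness of the controller weight estimation error. -/
theorem stmt0 (T₀ : ℝ) (M K m : ℕ)
    (Sig : ℝ → Matrix (Fin M) (Fin K) ℝ) (Del : ℝ → Matrix (Fin M) (Fin m) ℝ)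
    (hSigCont : ContinuousOn Sig (Set.Ici T₀)) (hDelCont : ContinuousOn Del (Set.Ici T₀))
    (Sbar Dbar : ℝ)
    (hSbar : ∀ t ≥ T₀, frobNorm (Sig t) ≤ Sbar)
    (hDbar : ∀ t ≥ T₀, frobNorm (Del t) ≤ Dbar)
    (k : ℝ) (hk : 0 < k)
    (hFullRank : ∀ t ≥ T₀, ∀ v : Fin K → ℝ,
      k * euclNorm v ^ 2 ≤ v ⬝ᵥ ((Sig t)ᵀ * Sig t).mulVec v)
    (α β : ℝ) (hα : 0 < α) (hβ : 0 < β)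
    (Γ : ℝ → Matrix (Fin K) (Fin K) ℝ)
    (hΓderiv : ∀ t ≥ T₀, HasDerivAt Γ (β • Γ t - α • (Γ t * (Sig t)ᵀ * Sig t * Γ t)) t)
    (hΓpd : ∀ t ≥ T₀, (Γ t).PosDef)
    (γlo γhi : ℝ) (hγlo : 0 < γlo) (hγ : γlo ≤ γhi)
    (hΓlo : ∀ t ≥ T₀, (Γ t - γlo • (1 : Matrix (Fin K) (Fin K) ℝ)).PosSemidef)
    (hΓhi : ∀ t ≥ T₀, (γhi • (1 : Matrix (Fin K) (Fin K) ℝ) - Γ t).PosSemidef)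
    (W : ℝ → Matrix (Fin K) (Fin m) ℝ)
    (hWderiv : ∀ t ≥ T₀, HasDerivAt W (-(α • (Γ t * (Sig t)ᵀ * (Sig t * W t - Del t)))) t)
    (A B : ℝ)
    (hA : A = (γlo / 2) * (α * k + β / γhi))
    (hB : B = 2 * (α * Sbar * Dbar) ^ 2 / (α * k + β / γhi)) :
    (∀ t ≥ T₀,
        ((W t)ᵀ * (Γ t)⁻¹ * W t).trace ≤
          ((W T₀)ᵀ * (Γ T₀)⁻¹ * W T₀).trace * Real.exp (-A * (t - T₀)) + B / A) ∧
      limsup (fun t => frobNorm (W t)) atTop ≤ Real.sqrt (γhi * B / A) :=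
  stmt0_general T₀ M K m Sig Del Sbar Dbar hSbar hDbar k hk hFullRank α β hα hβ Γ hΓderiv hΓpd γlo
    γhi hγlo hγ hΓlo hΓhi W hWderiv A B hA hB
end

section
/- Let β > 0 and let S : [0,∞) → ℝ^{K×K} be a continuous function with S(t) symmetric and k̲ I ⪯ S(t) ⪯ k̄ I for all t ≥ 0, where 0 < k̲ ≤ k̄. Let P : [0,∞) → ℝ^{K×K} be differentiable with P(t) symmetric, satisfying P'(t) = −β P(t) + S(t), and suppose p₁ I ⪯ P(0) ⪯ p₂ I with 0 < p₁ ≤ p₂. Then for all t ≥ 0, min(p₁, k̲/β) · I ⪯ P(t) ⪯ max(p₂, k̄/β) · I; consequently P(t) is positive definite for all t, and its inverse Γ(t) := P(t)⁻¹ satisfies (1/max(p₂, k̄/β)) · I ⪯ Γ(t) ⪯ (1/min(p₁, k̲/β)) · I. -/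
/-!
Integrating factor: if `f' ≥ -β f` then `exp (β t) f t` is nondecreasing, so `f` stays
nonnegative. Applied to the quadratic forms of `P t - c • 1` and `c • 1 - P t`, this keeps the
Loewner bounds `c • 1 ≤ P t ≤ C • 1` invariant as soon as they hold at `t = 0` and the forcing
satisfies `β c ≤ S ≤ β C`. The bounds for `P⁻¹` follow because `c⁻¹ • 1 - P⁻¹ = c⁻¹ P⁻¹ (P - c • 1)`
is a product of commuting positive semidefinite matrices.
-/

open Matrix

attribute [local instance] Matrix.normedAddCommGroup Matrix.normedSpace

open scoped MatrixOrder ComplexOrder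

theorem nonneg_of_hasDerivAt_of_neg_mul_le {f f' : ℝ → ℝ} {β : ℝ}
    (hf : ∀ t ≥ 0, HasDerivAt f (f' t) t) (hf' : ∀ t ≥ 0, -(β * f t) ≤ f' t) (h₀ : 0 ≤ f 0) :
    ∀ t ≥ 0, 0 ≤ f t := by
  set g : ℝ → ℝ := fun t => Real.exp (β * t) * f t
  have hg : ∀ t ≥ 0, HasDerivAt g (Real.exp (β * t) * (f' t + β * f t)) t := fun t ht => by
    have he : HasDerivAt (fun t => Real.exp (β * t)) (Real.exp (β * t) * β) t := by
      simpa using ((hasDerivAt_id t).const_mul β).exp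
    exact (he.mul (hf t ht)).congr_deriv (by ring)
  have hmono : MonotoneOn g (Set.Ici 0) := by
    refine monotoneOn_of_hasDerivWithinAt_nonneg (convex_Ici 0)
      (fun t ht => (hg t ht).continuousAt.continuousWithinAt)
      (fun t ht => (hg t (interior_subset ht)).hasDerivWithinAt) fun t ht => ?_
    have ht := interior_subset ht
    exact mul_nonneg (Real.exp_pos _).le (by linarith [hf' t ht])
  intro t ht
  have : g 0 ≤ g t := hmono Set.self_mem_Ici ht ht
  simp only [g, mul_zero, Real.exp_zero, one_mul] at this
  exact nonneg_of_mul_nonneg_right (h₀.trans this) (Real.exp_pos _)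

theorem HasDerivAt.dotProduct_mulVec {n : Type*} [Fintype n] {P : ℝ → Matrix n n ℝ}
    {P' : Matrix n n ℝ} {t : ℝ} (hP : HasDerivAt P P' t) (x y : n → ℝ) :
    HasDerivAt (fun s => x ⬝ᵥ (P s *ᵥ y)) (x ⬝ᵥ (P' *ᵥ y)) t := by
  let L : Matrix n n ℝ →ₗ[ℝ] ℝ :=
    { toFun := fun M => x ⬝ᵥ (M *ᵥ y)
      map_add' := fun M N => by simp [add_mulVec, dotProduct_add]
      map_smul' := fun c M => by simp [smul_mulVec, dotProduct_smul] }
  exact L.toContinuousLinearMap.hasFDerivAt.comp_hasDerivAt t hP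

namespace Matrix

theorem le_of_hasDerivAt_of_smul_sub_le {n : Type*} [Fintype n] {P P' : ℝ → Matrix n n ℝ}
    {C : Matrix n n ℝ} {β : ℝ} (hP : ∀ t ≥ 0, HasDerivAt P (P' t) t)
    (hherm : ∀ t ≥ 0, (P t - C).IsHermitian) (hP' : ∀ t ≥ 0, β • (C - P t) ≤ P' t)
    (h₀ : C ≤ P 0) : ∀ t ≥ 0, C ≤ P t := by
  intro t ht
  refine .of_dotProduct_mulVec_nonneg (hherm t ht) fun x => ?_
  rw [star_trivial]
  refine nonneg_of_hasDerivAt_of_neg_mul_le (f := fun s => x ⬝ᵥ ((P s - C) *ᵥ x)) (β := β)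
    (fun s hs => ((hP s hs).sub_const C).dotProduct_mulVec x x) (fun s hs => ?_)
    (h₀.dotProduct_mulVec_nonneg x) t ht
  have := (hP' s hs).dotProduct_mulVec_nonneg x
  simp only [star_trivial, sub_mulVec, smul_mulVec, dotProduct_sub, dotProduct_smul,
    smul_eq_mul] at this ⊢
  linarith

theorem le_of_hasDerivAt_of_le_smul_sub {n : Type*} [Fintype n] {P P' : ℝ → Matrix n n ℝ}
    {C : Matrix n n ℝ} {β : ℝ} (hP : ∀ t ≥ 0, HasDerivAt P (P' t) t)
    (hherm : ∀ t ≥ 0, (C - P t).IsHermitian) (hP' : ∀ t ≥ 0, P' t ≤ β • (C - P t))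
    (h₀ : P 0 ≤ C) : ∀ t ≥ 0, P t ≤ C := by
  have := le_of_hasDerivAt_of_smul_sub_le (P := -P) (P' := -P') (C := -C) (β := β)
    (fun t ht => (hP t ht).neg) (fun t ht => by simpa [sub_eq_neg_add, add_comm] using hherm t ht)
    (fun t ht => by simpa [sub_eq_neg_add, add_comm, smul_add, smul_neg] using hP' t ht)
    (by simpa using h₀)
  intro t ht
  simpa using this t ht

variable {n 𝕜 : Type*} [DecidableEq n] [RCLike 𝕜]

theorem smul_one_le_smul_one {c d : ℝ} (h : c ≤ d) : c • (1 : Matrix n n 𝕜) ≤ d • 1 := by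
  rw [le_iff, ← sub_smul]
  exact PosSemidef.one.smul (sub_nonneg.mpr h)

theorem posDef_of_smul_one_le {A : Matrix n n 𝕜} {c : ℝ} (hc : 0 < c) (h : c • 1 ≤ A) :
    A.PosDef := by
  simpa using (PosDef.one.smul hc).add_posSemidef (le_iff.mp h)

variable [Fintype n]

theorem commute_nonsing_inv_sub_smul_one {A : Matrix n n 𝕜} (hA : IsUnit A.det) (c : ℝ) :
    Commute A⁻¹ (A - c • 1) :=
  Commute.sub_right ((nonsing_inv_mul A hA).trans (mul_nonsing_inv A hA).symm)
    ((Commute.one_right _).smul_right c)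

theorem nonsing_inv_le_smul_one {A : Matrix n n 𝕜} {c : ℝ} (hc : 0 < c) (h : c • 1 ≤ A) :
    A⁻¹ ≤ c⁻¹ • 1 := by
  have hA := posDef_of_smul_one_le hc h
  have hdet := A.isUnit_iff_isUnit_det.mp hA.isUnit
  have key : c⁻¹ • (1 : Matrix n n 𝕜) - A⁻¹ = c⁻¹ • (A⁻¹ * (A - c • 1)) := by
    rw [Matrix.mul_sub, nonsing_inv_mul _ hdet, Matrix.mul_smul, Matrix.mul_one, smul_sub,
      smul_smul, inv_mul_cancel₀ hc.ne', one_smul]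
  rw [le_iff, key, ← nonneg_iff_posSemidef]
  exact smul_nonneg (inv_nonneg.mpr hc.le) <| Commute.mul_nonneg
    (nonneg_iff_posSemidef.mpr hA.inv.posSemidef) (sub_nonneg.mpr h)
    (commute_nonsing_inv_sub_smul_one hdet c)

theorem smul_one_le_nonsing_inv {A : Matrix n n 𝕜} (hA : A.PosDef) {c : ℝ} (hc : 0 < c)
    (h : A ≤ c • 1) : c⁻¹ • 1 ≤ A⁻¹ := by
  have hdet := A.isUnit_iff_isUnit_det.mp hA.isUnit
  have key : A⁻¹ - c⁻¹ • (1 : Matrix n n 𝕜) = c⁻¹ • (A⁻¹ * -(A - c • 1)) := by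
    rw [Matrix.mul_neg, Matrix.mul_sub, nonsing_inv_mul _ hdet, Matrix.mul_smul, Matrix.mul_one,
      neg_sub, smul_sub, smul_smul, inv_mul_cancel₀ hc.ne', one_smul]
  rw [le_iff, key, ← nonneg_iff_posSemidef]
  exact smul_nonneg (inv_nonneg.mpr hc.le) <| Commute.mul_nonneg
    (nonneg_iff_posSemidef.mpr hA.inv.posSemidef) (by simpa using h)
    (commute_nonsing_inv_sub_smul_one hdet c).neg_right

end Matrix

theorem stmt5_general (K : ℕ) (β : ℝ) (hβ : 0 < β)
    (S : ℝ → Matrix (Fin K) (Fin K) ℝ)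
    (klo khi : ℝ) (hklo : 0 < klo)
    (hSlo : ∀ t ≥ (0 : ℝ), (S t - klo • (1 : Matrix (Fin K) (Fin K) ℝ)).PosSemidef)
    (hShi : ∀ t ≥ (0 : ℝ), (khi • (1 : Matrix (Fin K) (Fin K) ℝ) - S t).PosSemidef)
    (P : ℝ → Matrix (Fin K) (Fin K) ℝ)
    (hPsymm : ∀ t ≥ (0 : ℝ), (P t).IsSymm)
    (hPderiv : ∀ t ≥ (0 : ℝ), HasDerivAt P (-(β • P t) + S t) t)
    (p₁ p₂ : ℝ) (hp₁ : 0 < p₁) (hp : p₁ ≤ p₂)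
    (hP0lo : (P 0 - p₁ • (1 : Matrix (Fin K) (Fin K) ℝ)).PosSemidef)
    (hP0hi : (p₂ • (1 : Matrix (Fin K) (Fin K) ℝ) - P 0).PosSemidef) :
    ∀ t ≥ (0 : ℝ),
      (P t - min p₁ (klo / β) • (1 : Matrix (Fin K) (Fin K) ℝ)).PosSemidef ∧
      (max p₂ (khi / β) • (1 : Matrix (Fin K) (Fin K) ℝ) - P t).PosSemidef ∧
      (P t).PosDef ∧
      ((P t)⁻¹ - (1 / max p₂ (khi / β)) • (1 : Matrix (Fin K) (Fin K) ℝ)).PosSemidef ∧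
      ((1 / min p₁ (klo / β)) • (1 : Matrix (Fin K) (Fin K) ℝ) - (P t)⁻¹).PosSemidef := by
  set c := min p₁ (klo / β)
  set C := max p₂ (khi / β)
  have hc : 0 < c := lt_min hp₁ (div_pos hklo hβ)
  have hC : 0 < C := hp₁.trans_le (hp.trans (le_max_left _ _))
  have hβc : β * c ≤ klo := (le_div_iff₀' hβ).mp (min_le_right _ _)
  have hβC : khi ≤ β * C := (div_le_iff₀' hβ).mp (le_max_right _ _)
  have hherm : ∀ t ≥ (0 : ℝ), (P t).IsHermitian := fun t ht =>
    isHermitian_iff_isSymm.mpr (hPsymm t ht)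
  have hlo : ∀ t ≥ (0 : ℝ), c • (1 : Matrix (Fin K) (Fin K) ℝ) ≤ P t := by
    refine le_of_hasDerivAt_of_smul_sub_le (β := β) hPderiv
      (fun t ht => (hherm t ht).sub (isHermitian_one.smul (.all c))) (fun t ht => ?_)
      ((smul_one_le_smul_one (min_le_left _ _)).trans hP0lo)
    rw [le_iff, show -(β • P t) + S t - β • (c • 1 - P t) = S t - (β * c) • 1 by module, ← le_iff]
    exact (smul_one_le_smul_one hβc).trans (hSlo t ht)
  have hhi : ∀ t ≥ (0 : ℝ), P t ≤ C • (1 : Matrix (Fin K) (Fin K) ℝ) := by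
    refine le_of_hasDerivAt_of_le_smul_sub (β := β) hPderiv
      (fun t ht => (isHermitian_one.smul (.all C)).sub (hherm t ht)) (fun t ht => ?_)
      ((le_iff.mpr hP0hi).trans (smul_one_le_smul_one (le_max_left _ _)))
    rw [le_iff, show β • (C • 1 - P t) - (-(β • P t) + S t) = (β * C) • 1 - S t by module,
      ← le_iff]
    exact (le_iff.mpr (hShi t ht)).trans (smul_one_le_smul_one hβC)
  intro t ht
  have hPt : (P t).PosDef := posDef_of_smul_one_le hc (hlo t ht)
  refine ⟨hlo t ht, hhi t ht, hPt, ?_, ?_⟩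
  · simpa only [one_div, le_iff] using smul_one_le_nonsing_inv hPt hC (hhi t ht)
  · simpa only [one_div, le_iff] using nonsing_inv_le_smul_one hc (hlo t ht)

/-- Uniform two-sided Loewner bounds on the solution of the linear matrix ODE
`P' = −βP + S`, and the resulting bounds on the inverse gain `Γ = P⁻¹`. -/
theorem stmt5 (K : ℕ) (β : ℝ) (hβ : 0 < β)
    (S : ℝ → Matrix (Fin K) (Fin K) ℝ)
    (hScont : ContinuousOn S (Set.Ici (0 : ℝ)))
    (hSsymm : ∀ t ≥ (0 : ℝ), (S t).IsSymm)
    (klo khi : ℝ) (hklo : 0 < klo) (hk : klo ≤ khi)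
    (hSlo : ∀ t ≥ (0 : ℝ), (S t - klo • (1 : Matrix (Fin K) (Fin K) ℝ)).PosSemidef)
    (hShi : ∀ t ≥ (0 : ℝ), (khi • (1 : Matrix (Fin K) (Fin K) ℝ) - S t).PosSemidef)
    (P : ℝ → Matrix (Fin K) (Fin K) ℝ)
    (hPsymm : ∀ t ≥ (0 : ℝ), (P t).IsSymm)
    (hPderiv : ∀ t ≥ (0 : ℝ), HasDerivAt P (-(β • P t) + S t) t)
    (p₁ p₂ : ℝ) (hp₁ : 0 < p₁) (hp : p₁ ≤ p₂)
    (hP0lo : (P 0 - p₁ • (1 : Matrix (Fin K) (Fin K) ℝ)).PosSemidef)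
    (hP0hi : (p₂ • (1 : Matrix (Fin K) (Fin K) ℝ) - P 0).PosSemidef) :
    ∀ t ≥ (0 : ℝ),
      (P t - min p₁ (klo / β) • (1 : Matrix (Fin K) (Fin K) ℝ)).PosSemidef ∧
      (max p₂ (khi / β) • (1 : Matrix (Fin K) (Fin K) ℝ) - P t).PosSemidef ∧
      (P t).PosDef ∧
      ((P t)⁻¹ - (1 / max p₂ (khi / β)) • (1 : Matrix (Fin K) (Fin K) ℝ)).PosSemidef ∧
      ((1 / min p₁ (klo / β)) • (1 : Matrix (Fin K) (Fin K) ℝ) - (P t)⁻¹).PosSemidef :=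
  stmt5_general K β hβ S klo khi hklo hSlo hShi P hPsymm hPderiv p₁ p₂ hp₁ hp hP0lo hP0hi
end

section
/- Let C > 0 and 𝒯 > 0, and let (V_s)_{s≥0} and (D_s)_{s≥0} be sequences of real numbers with V_s ≥ 0 and D_s > 0, satisfying: (i) V_{s+1} ≤ V_s e^{−C𝒯} + D_{s+1}/C for all s ≥ 0; (ii) D_{s+1} ≥ 2 D_s e^{−C𝒯} for all s ≥ 0; and (iii) V_0 ≤ 2 D_0 / C. Then V_s ≤ 2 D_s / C for all s ≥ 0. Moreover, if in addition D_s converges to a limit D̄ as s → ∞, then limsup_{s→∞} V_s ≤ 2 D̄ / C. -/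
open Filter

/-!
Induction on `s`: if `V s ≤ 2 D s / C`, the contracted term `V s e^{-C𝒯}` is at most
`2 D s e^{-C𝒯} / C ≤ D (s+1) / C` by the growth condition, and the recursion adds one more
`D (s+1) / C`. The limsup bound follows by passing to the limit in `V s ≤ 2 D s / C`.
-/

theorem le_two_mul_div_of_le_mul_add_div {C q : ℝ} (hC : 0 ≤ C) (hq : 0 ≤ q) {V D : ℕ → ℝ}
    (hrec : ∀ s, V (s + 1) ≤ V s * q + D (s + 1) / C)
    (hgrow : ∀ s, 2 * D s * q ≤ D (s + 1)) (h0 : V 0 ≤ 2 * D 0 / C) :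
    ∀ s, V s ≤ 2 * D s / C
  | 0 => h0
  | s + 1 =>
    have ih := le_two_mul_div_of_le_mul_add_div hC hq hrec hgrow h0 s
    calc V (s + 1) ≤ V s * q + D (s + 1) / C := hrec s
      _ ≤ 2 * D s * q / C + D (s + 1) / C := by
        rw [mul_div_right_comm]
        gcongr
      _ ≤ D (s + 1) / C + D (s + 1) / C := by gcongr; exact hgrow s
      _ = 2 * D (s + 1) / C := by ring

theorem Filter.limsup_le_of_eventuallyLE_of_tendsto {α β : Type*}
    [ConditionallyCompleteLinearOrder β] [TopologicalSpace β] [OrderTopology β]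
    {l : Filter α} [l.NeBot] {f g : α → β} {b : β} (hf : l.IsCoboundedUnder (· ≤ ·) f)
    (hfg : f ≤ᶠ[l] g) (hg : Tendsto g l (nhds b)) : limsup f l ≤ b :=
  hg.limsup_eq ▸ limsup_le_limsup hfg hf hg.isBoundedUnder_le

theorem stmt9_general (C 𝒯 : ℝ) (hC : 0 < C)
    (V D : ℕ → ℝ) (hVnonneg : ∀ s, 0 ≤ V s)
    (hrec : ∀ s, V (s + 1) ≤ V s * Real.exp (-C * 𝒯) + D (s + 1) / C)
    (hDgrow : ∀ s, 2 * D s * Real.exp (-C * 𝒯) ≤ D (s + 1))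
    (hV0 : V 0 ≤ 2 * D 0 / C) :
    (∀ s, V s ≤ 2 * D s / C) ∧
      ∀ Dbar : ℝ, Tendsto D atTop (nhds Dbar) → limsup V atTop ≤ 2 * Dbar / C := by
  have hbound := le_two_mul_div_of_le_mul_add_div hC.le (Real.exp_pos _).le hrec hDgrow hV0
  refine ⟨hbound, fun Dbar hD => ?_⟩
  exact limsup_le_of_eventuallyLE_of_tendsto
    (IsCoboundedUnder.of_frequently_ge (Frequently.of_forall hVnonneg))
    (Eventually.of_forall hbound) ((hD.const_mul 2).div_const C)

/-- Discrete recursion lemma for the purging analysis: the Lyapunov values at the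
purging instants satisfy `V_s ≤ 2D_s/C`, and hence `limsup V_s ≤ 2Dbar/C` when
`D_s → Dbar`. -/
theorem stmt9 (C 𝒯 : ℝ) (hC : 0 < C) (h𝒯 : 0 < 𝒯)
    (V D : ℕ → ℝ) (hVnonneg : ∀ s, 0 ≤ V s) (hDpos : ∀ s, 0 < D s)
    (hrec : ∀ s, V (s + 1) ≤ V s * Real.exp (-C * 𝒯) + D (s + 1) / C)
    (hDgrow : ∀ s, 2 * D s * Real.exp (-C * 𝒯) ≤ D (s + 1))
    (hV0 : V 0 ≤ 2 * D 0 / C) :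
    (∀ s, V s ≤ 2 * D s / C) ∧
      ∀ Dbar : ℝ, Tendsto D atTop (nhds Dbar) → limsup V atTop ≤ 2 * Dbar / C :=
  stmt9_general C 𝒯 hC V D hVnonneg hrec hDgrow hV0
end

section
/- Let C > 0, 𝒯 > 0, γ̄ > 0, T₀ ∈ ℝ, and let (T_s)_{s≥0} be a strictly increasing sequence of times with T_{s+1} − T_s ≥ 𝒯 for all s and T_s → ∞. Let V : [T₀,∞) → ℝ be continuous and nonnegative, differentiable on each open interval (T_s, T_{s+1}), and let (D_s)_{s≥0} be positive reals with: V'(t) ≤ −C V(t) + D_{s+1} for all t ∈ (T_s, T_{s+1}) and all s ≥ 0; D_{s+1} ≥ 2 D_s e^{−C𝒯} for all s; V(T₀) ≤ 2 D_0 / C; and D_s → D̄ as s → ∞. Let W̃ : [T₀,∞) → ℝ^K satisfy ‖W̃(t)‖² ≤ 2 γ̄ V(t) for all t ≥ T₀. Then limsup_{s→∞} ‖W̃(T_s)‖ ≤ 2 √(γ̄ D̄ / C). -/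
/-!
On each inter-purge interval the linear comparison principle gives
`V(T_{s+1}) ≤ D_{s+1}/C + V(T_s) e^{-C𝒯}`, so the dwell-time condition
`2 D_s e^{-C𝒯} ≤ D_{s+1}` propagates the invariant `V(T_s) ≤ 2 D_s / C` by induction.
The lower Lyapunov bound turns it into `‖W̃(T_s)‖ ≤ 2 √(γ̄ D_s / C)`, whose right-hand side
tends to `2 √(γ̄ D̄ / C)`.
-/

open Filter Set Real

theorem le_div_add_mul_exp_of_hasDerivAt_le {V V' : ℝ → ℝ} {a b C D : ℝ} (hC : C ≠ 0)
    (hab : a ≤ b) (hV : ContinuousOn V (Icc a b))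
    (hV' : ∀ t ∈ Ioo a b, HasDerivAt V (V' t) t)
    (hineq : ∀ t ∈ Ioo a b, V' t ≤ -C * V t + D) :
    V b ≤ D / C + (V a - D / C) * exp (-C * (b - a)) := by
  set g : ℝ → ℝ := fun t => (V t - D / C) * exp (C * t)
  have hg : ContinuousOn g (Icc a b) :=
    (hV.sub continuousOn_const).mul (continuous_exp.comp (continuous_const_mul C)).continuousOn
  have hg' : ∀ t ∈ Ioo a b,
      HasDerivAt g ((V' t + C * V t - D) * exp (C * t)) t := by
    intro t ht
    have hexp : HasDerivAt (fun t => exp (C * t)) (exp (C * t) * C) t := by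
      simpa using ((hasDerivAt_id t).const_mul C).exp
    refine (((hV' t ht).sub_const (D / C)).mul hexp).congr_deriv ?_
    field_simp
    ring
  have hanti : AntitoneOn g (Icc a b) := by
    refine antitoneOn_of_hasDerivWithinAt_nonpos (convex_Icc a b) hg
      (f' := fun t => (V' t + C * V t - D) * exp (C * t)) (fun t ht => ?_) (fun t ht => ?_)
    all_goals rw [interior_Icc] at ht
    · exact (hg' t ht).hasDerivWithinAt
    · exact mul_nonpos_of_nonpos_of_nonneg (by linarith [hineq t ht]) (exp_pos _).le
  have hgba : g b ≤ g a := hanti ⟨le_rfl, hab⟩ ⟨hab, le_rfl⟩ hab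
  have hsplit : exp (C * a) = exp (-C * (b - a)) * exp (C * b) := by
    rw [← exp_add]; ring_nf
  have : (V b - D / C) * exp (C * b) ≤ (V a - D / C) * exp (-C * (b - a)) * exp (C * b) := by
    simpa only [g, hsplit, mul_assoc] using hgba
  linarith [le_of_mul_le_mul_right this (exp_pos _)]

theorem le_two_mul_div_of_dwell {V V' : ℝ → ℝ} {a b C 𝒯 d d' : ℝ} (hC : 0 < C)
    (hab : a ≤ b) (hdwell : 𝒯 ≤ b - a) (hV : ContinuousOn V (Icc a b))
    (hV' : ∀ t ∈ Ioo a b, HasDerivAt V (V' t) t)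
    (hineq : ∀ t ∈ Ioo a b, V' t ≤ -C * V t + d')
    (hd' : 0 ≤ d') (hgrow : 2 * d * exp (-C * 𝒯) ≤ d')
    (hVa : 0 ≤ V a) (hVa_le : V a ≤ 2 * d / C) :
    V b ≤ 2 * d' / C := by
  have hcomp := le_div_add_mul_exp_of_hasDerivAt_le hC.ne' hab hV hV' hineq
  have hexp : exp (-C * (b - a)) ≤ exp (-C * 𝒯) := exp_le_exp.2 (by nlinarith)
  calc V b ≤ d' / C + (V a - d' / C) * exp (-C * (b - a)) := hcomp
    _ ≤ d' / C + V a * exp (-C * 𝒯) := by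
        nlinarith [exp_pos (-C * (b - a)), mul_le_mul_of_nonneg_left hexp hVa,
          div_nonneg hd' hC.le]
    _ ≤ d' / C + 2 * d / C * exp (-C * 𝒯) := by gcongr
    _ = d' / C + 2 * d * exp (-C * 𝒯) / C := by ring
    _ ≤ d' / C + d' / C := by gcongr
    _ = 2 * d' / C := by ring

theorem norm_le_two_mul_sqrt_of_sq_le {E : Type*} [SeminormedAddCommGroup E] {w : E}
    {γ v d C : ℝ} (hγ : 0 ≤ γ) (hw : ‖w‖ ^ 2 ≤ 2 * γ * v) (hv : v ≤ 2 * d / C) :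
    ‖w‖ ≤ 2 * √(γ * d / C) := by
  have h4 : ‖w‖ ^ 2 ≤ 4 * (γ * d / C) := by
    calc ‖w‖ ^ 2 ≤ 2 * γ * v := hw
      _ ≤ 2 * γ * (2 * d / C) := by gcongr
      _ = 4 * (γ * d / C) := by ring
  calc ‖w‖ ≤ √(4 * (γ * d / C)) := le_sqrt_of_sq_le h4
    _ = 2 * √(γ * d / C) := by
        rw [sqrt_mul (by norm_num), show (4 : ℝ) = 2 ^ 2 by norm_num, sqrt_sq (by norm_num)]

theorem limsup_le_of_le_of_tendsto {ι : Type*} {l : Filter ι} [l.NeBot] {u v : ι → ℝ} {L : ℝ}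
    (hu : ∀ n, 0 ≤ u n) (huv : ∀ n, u n ≤ v n) (hv : Tendsto v l (nhds L)) :
    limsup u l ≤ L := by
  rw [← hv.limsup_eq]
  exact limsup_le_limsup (Eventually.of_forall huv)
    (isCoboundedUnder_le_of_le l hu) hv.isBoundedUnder_le

theorem stmt10_general (C 𝒯 γhi T₀ : ℝ) (hC : 0 < C) (hγhi : 0 < γhi) (K : ℕ)
    (T : ℕ → ℝ) (hT0 : T 0 = T₀) (hTmono : StrictMono T)
    (hTdwell : ∀ s, 𝒯 ≤ T (s + 1) - T s)
    (V V' : ℝ → ℝ)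
    (hVcont : ContinuousOn V (Set.Ici T₀))
    (hVnonneg : ∀ t ≥ T₀, 0 ≤ V t)
    (hVderiv : ∀ s, ∀ t ∈ Set.Ioo (T s) (T (s + 1)), HasDerivAt V (V' t) t)
    (D : ℕ → ℝ) (hDpos : ∀ s, 0 < D s)
    (hineq : ∀ s, ∀ t ∈ Set.Ioo (T s) (T (s + 1)), V' t ≤ -C * V t + D (s + 1))
    (hDgrow : ∀ s, 2 * D s * Real.exp (-C * 𝒯) ≤ D (s + 1))
    (hV0 : V T₀ ≤ 2 * D 0 / C)
    (Dbar : ℝ) (hDlim : Tendsto D atTop (nhds Dbar))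
    (W : ℝ → EuclideanSpace ℝ (Fin K))
    (hW : ∀ t ≥ T₀, ‖W t‖ ^ 2 ≤ 2 * γhi * V t) :
    limsup (fun s => ‖W (T s)‖) atTop ≤ 2 * Real.sqrt (γhi * Dbar / C) := by
  have hT₀_le : ∀ s, T₀ ≤ T s := fun s => hT0 ▸ hTmono.monotone (Nat.zero_le s)
  have hVT : ∀ s, V (T s) ≤ 2 * D s / C := by
    intro s
    induction s with
    | zero => simpa [hT0] using hV0
    | succ s ih =>
      exact le_two_mul_div_of_dwell hC (hTmono s.lt_succ_self).le (hTdwell s)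
        (hVcont.mono fun t ht => (hT₀_le s).trans ht.1) (hVderiv s) (hineq s)
        (hDpos (s + 1)).le (hDgrow s) (hVnonneg _ (hT₀_le s)) ih
  refine limsup_le_of_le_of_tendsto (fun s => norm_nonneg _)
    (fun s => norm_le_two_mul_sqrt_of_sq_le hγhi.le (hW _ (hT₀_le s)) (hVT s)) ?_
  exact ((hDlim.const_mul γhi).div_const C).sqrt.const_mul 2

/-- Abstract (hybrid) form of Theorem 2: uniform ultimate boundedness of the
reward-weight estimation error under purging with a minimum dwell time. -/
theorem stmt10 (C 𝒯 γhi T₀ : ℝ) (hC : 0 < C) (h𝒯 : 0 < 𝒯) (hγhi : 0 < γhi) (K : ℕ)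
    (T : ℕ → ℝ) (hT0 : T 0 = T₀) (hTmono : StrictMono T)
    (hTdwell : ∀ s, 𝒯 ≤ T (s + 1) - T s)
    (hTtop : Tendsto T atTop atTop)
    (V V' : ℝ → ℝ)
    (hVcont : ContinuousOn V (Set.Ici T₀))
    (hVnonneg : ∀ t ≥ T₀, 0 ≤ V t)
    (hVderiv : ∀ s, ∀ t ∈ Set.Ioo (T s) (T (s + 1)), HasDerivAt V (V' t) t)
    (D : ℕ → ℝ) (hDpos : ∀ s, 0 < D s)
    (hineq : ∀ s, ∀ t ∈ Set.Ioo (T s) (T (s + 1)), V' t ≤ -C * V t + D (s + 1))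
    (hDgrow : ∀ s, 2 * D s * Real.exp (-C * 𝒯) ≤ D (s + 1))
    (hV0 : V T₀ ≤ 2 * D 0 / C)
    (Dbar : ℝ) (hDlim : Tendsto D atTop (nhds Dbar))
    (W : ℝ → EuclideanSpace ℝ (Fin K))
    (hW : ∀ t ≥ T₀, ‖W t‖ ^ 2 ≤ 2 * γhi * V t) :
    limsup (fun s => ‖W (T s)‖) atTop ≤ 2 * Real.sqrt (γhi * Dbar / C) :=
  stmt10_general C 𝒯 γhi T₀ hC hγhi K T hT0 hTmono hTdwell V V' hVcont hVnonneg hVderiv D hDpos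
    hineq hDgrow hV0 Dbar hDlim W hW
end
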